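/- Intertwining construction (Diaconis–Fill): let P: A×B, Λ: B×A, Q: A×A', Λ': B'×A', R: B×B' be stochastic matrices on finite sets with commutation relation Λ·Q = R·Λ' (as matrices B×A'), and suppose probability measure ν on B satisfies νΛ = μ on A. Define the bivariate kernel T((a,b),(a',b')) supported on pairs with (QΛ'^T-compatibility): T((a,b),(a',b')) = [R(b,b')·Λ'(b',a')·1_{Q(a,a')>0}] / (RΛ')(b,a') when (RΛ')(b,a') > 0 (with a' drawn from the Q-step from a). Then the B'-marginal of the evolved measure is νR. Specialized to the paper: if Y(t) satisfies P^{S+1,t}_{S-}(Y(t),X(t)) > 0 and Z is distributed as Prob{Z} = P^{S+1,t}_{t+}(Y(t),Z)·P^{S+1,t+1}_{S-}(Z,X(t+1)) / (P^{S+1,t}_{t+}P^{S+1,t+1}_{S-})(Y(t),X(t+1)), then this conditional distribution is well-defined, i.e. the denominator (P^{S+1,t}_{t+}P^{S+1,t+1}_{S-})(Y(t),X(t+1)) is strictly positive, given that P^{S,t}_{t+}(X(t),X(t+1)) > 0. -/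

import Mathlib

/-!
Marginal: summing the kernel against `Λ b ·` turns `Q` into `R Λ'` by the intertwining relation,
which cancels the denominator (where the denominator vanishes, so does `R b b' * Λ' b' a'`);
summing out `a'` with `Λ'` stochastic leaves `ν R`.

Positivity: the two positive transitions force `|X(t+1) i - Y(t) i| ≤ 1`. Then
`Z = min Y(t) X(t+1) + 1` is an interlacing configuration through which both transitions have
only positive factors, and every other summand is nonnegative.
-/

open Finset

noncomputable def poch (a : ℝ) (n : ℕ) : ℝ := ∏ k ∈ Finset.range n, (a + k)

noncomputable def pairProd {N : ℕ} (f : Fin N → ℤ) : ℝ :=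
  ∏ p ∈ Finset.univ.filter (fun p : Fin N × Fin N => p.1 < p.2), ((f p.2 - f p.1 : ℤ) : ℝ)

noncomputable def secX (N T S t : ℕ) : Finset ℤ :=
  Finset.Icc (max 0 ((t : ℤ) + S - T)) (min ((t : ℤ) + N - 1) ((S : ℤ) + N - 1))

noncomputable def Xcal (N T S t : ℕ) : Finset (Fin N → ℤ) :=
  (Fintype.piFinset fun _ => secX N T S t).filter
    (fun f => ∀ i j : Fin N, i < j → f i < f j)

noncomputable def Ptp (N T S t : ℕ) (X Y : Fin N → ℤ) : ℝ :=
  if ∀ i, Y i = X i ∨ Y i = X i + 1 then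
    (pairProd Y *
      ∏ i, (if Y i = X i + 1 then (N : ℝ) + S - X i - 1 else (X i : ℝ) + T - t - S)) /
      (poch ((T : ℝ) - t) N * pairProd X)
  else 0

noncomputable def PSm (N T S t : ℕ) (X Y : Fin N → ℤ) : ℝ :=
  if ∀ i, Y i = X i ∨ Y i = X i - 1 then
    (pairProd Y *
      ∏ i, (if Y i = X i - 1 then (X i : ℝ) else (S : ℝ) + N - 1 - X i)) /
      (poch (S : ℝ) N * pairProd X)
  else 0

section Intertwining

variable {𝕜 : Type*} [Field 𝕜] [LinearOrder 𝕜] [IsStrictOrderedRing 𝕜]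
  {A A' B B' : Type*} [Fintype A] [Fintype B']

def fillKernel (Q : A → A' → 𝕜) (R : B → B' → 𝕜) (Λ' : B' → A' → 𝕜)
    (a : A) (b : B) (a' : A') (b' : B') : 𝕜 :=
  if 0 < ∑ b'', R b b'' * Λ' b'' a' then
    Q a a' * R b b' * Λ' b' a' / ∑ b'', R b b'' * Λ' b'' a'
  else 0

variable {Λ : B → A → 𝕜} {Q : A → A' → 𝕜} {R : B → B' → 𝕜} {Λ' : B' → A' → 𝕜}

theorem sum_mul_fillKernel (hR0 : ∀ b b', 0 ≤ R b b') (hΛ'0 : ∀ b' a', 0 ≤ Λ' b' a')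
    (hcomm : ∀ b a', ∑ a, Λ b a * Q a a' = ∑ b', R b b' * Λ' b' a')
    (b : B) (a' : A') (b' : B') :
    ∑ a, Λ b a * fillKernel Q R Λ' a b a' b' = R b b' * Λ' b' a' := by
  unfold fillKernel
  set D := ∑ b'', R b b'' * Λ' b'' a'
  have hterm_nonneg : ∀ b'' ∈ univ, 0 ≤ R b b'' * Λ' b'' a' :=
    fun b'' _ => mul_nonneg (hR0 b b'') (hΛ'0 b'' a')
  split_ifs with hD
  · calc ∑ a, Λ b a * (Q a a' * R b b' * Λ' b' a' / D)
        = (∑ a, Λ b a * Q a a') * (R b b' * Λ' b' a') / D := by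
          simp only [sum_mul, sum_div]
          exact sum_congr rfl fun a _ => by ring
      _ = R b b' * Λ' b' a' := by rw [hcomm, mul_div_cancel_left₀ _ hD.ne']
  · have hD0 : D = 0 := le_antisymm (not_lt.mp hD) (sum_nonneg hterm_nonneg)
    rw [(sum_eq_zero_iff_of_nonneg hterm_nonneg).mp hD0 b' (mem_univ b')]
    simp

theorem sum_fillKernel_eq_mul [Fintype A'] [Fintype B]
    (hR0 : ∀ b b', 0 ≤ R b b') (hΛ'0 : ∀ b' a', 0 ≤ Λ' b' a')
    (hΛ'1 : ∀ b', ∑ a', Λ' b' a' = 1)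
    (hcomm : ∀ b a', ∑ a, Λ b a * Q a a' = ∑ b', R b b' * Λ' b' a')
    (ν : B → 𝕜) (b' : B') :
    ∑ a', ∑ a, ∑ b, ν b * Λ b a * fillKernel Q R Λ' a b a' b' = ∑ b, ν b * R b b' := by
  calc ∑ a', ∑ a, ∑ b, ν b * Λ b a * fillKernel Q R Λ' a b a' b'
      = ∑ a', ∑ b, ν b * ∑ a, Λ b a * fillKernel Q R Λ' a b a' b' :=
        sum_congr rfl fun a' _ => by rw [sum_comm]; simp only [mul_sum, mul_assoc]
    _ = ∑ a', ∑ b, ν b * (R b b' * Λ' b' a') := by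
        simp only [sum_mul_fillKernel hR0 hΛ'0 hcomm]
    _ = ∑ b, ν b * R b b' * ∑ a', Λ' b' a' := by
        rw [sum_comm]; simp only [mul_sum, mul_assoc]
    _ = ∑ b, ν b * R b b' := by simp only [hΛ'1, mul_one]

end Intertwining

section Transitions

variable {N T S t : ℕ} {X Y : Fin N → ℤ}

theorem poch_pos {a : ℝ} (ha : 0 < a) (n : ℕ) : 0 < poch a n :=
  prod_pos fun _ _ => by positivity

theorem pairProd_pos (hf : StrictMono X) : 0 < pairProd X :=
  prod_pos fun p hp => by
    have := hf (mem_filter.mp hp).2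
    exact_mod_cast sub_pos.mpr this

theorem mem_Xcal :
    X ∈ Xcal N T S t ↔
      (∀ i, 0 ≤ X i ∧ (t : ℤ) + S ≤ X i + T ∧ X i < (t : ℤ) + N ∧ X i < (S : ℤ) + N) ∧
        StrictMono X := by
  simp only [Xcal, secX, mem_filter, Fintype.mem_piFinset, mem_Icc, max_le_iff, le_min_iff]
  refine and_congr (forall_congr' fun i => ?_) Iff.rfl
  omega

theorem step_of_Ptp_ne_zero (h : Ptp N T S t X Y ≠ 0) (i : Fin N) :
    Y i = X i ∨ Y i = X i + 1 := by
  by_contra hc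
  exact h (if_neg fun hall => hc (hall i))

theorem step_of_PSm_ne_zero (h : PSm N T S t X Y ≠ 0) (i : Fin N) :
    Y i = X i ∨ Y i = X i - 1 := by
  by_contra hc
  exact h (if_neg fun hall => hc (hall i))

theorem Ptp_nonneg (ht : t < T) (hX : StrictMono X) (hY : StrictMono Y)
    (hlo : ∀ i, (t : ℤ) + S ≤ X i + T) (hhi : ∀ i, X i < (S : ℤ) + N) :
    0 ≤ Ptp N T S t X Y := by
  have hT : (0 : ℝ) < T - t := sub_pos.mpr (by exact_mod_cast ht)
  unfold Ptp
  split_ifs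
  · refine div_nonneg (mul_nonneg (pairProd_pos hY).le (prod_nonneg fun i _ => ?_))
      (mul_pos (poch_pos hT N) (pairProd_pos hX)).le
    have hlo : (t : ℝ) + S ≤ X i + T := by exact_mod_cast hlo i
    have hhi : (X i : ℝ) + 1 ≤ S + N := by exact_mod_cast hhi i
    split_ifs <;> linarith
  · exact le_rfl

theorem Ptp_pos (ht : t < T) (hX : StrictMono X) (hY : StrictMono Y)
    (hstep : ∀ i, Y i = X i ∨ Y i = X i + 1)
    (hup : ∀ i, Y i = X i + 1 → X i + 1 < (S : ℤ) + N)
    (hstay : ∀ i, Y i = X i → (t : ℤ) + S < X i + T) :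
    0 < Ptp N T S t X Y := by
  have hT : (0 : ℝ) < T - t := sub_pos.mpr (by exact_mod_cast ht)
  rw [Ptp, if_pos hstep]
  refine div_pos (mul_pos (pairProd_pos hY) (prod_pos fun i _ => ?_))
    (mul_pos (poch_pos hT N) (pairProd_pos hX))
  split_ifs with hi
  · have : (X i : ℝ) + 1 < S + N := by exact_mod_cast hup i hi
    linarith
  · have : (t : ℝ) + S < X i + T := by exact_mod_cast hstay i ((hstep i).resolve_right hi)
    linarith

theorem PSm_nonneg (hS : 0 < S) (hX : StrictMono X) (hY : StrictMono Y)
    (hlo : ∀ i, 0 ≤ X i) (hhi : ∀ i, X i < (S : ℤ) + N) :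
    0 ≤ PSm N T S t X Y := by
  unfold PSm
  split_ifs
  · refine div_nonneg (mul_nonneg (pairProd_pos hY).le (prod_nonneg fun i _ => ?_))
      (mul_pos (poch_pos (by exact_mod_cast hS) N) (pairProd_pos hX)).le
    have hlo : (0 : ℝ) ≤ X i := by exact_mod_cast hlo i
    have hhi : (X i : ℝ) + 1 ≤ S + N := by exact_mod_cast hhi i
    split_ifs <;> linarith
  · exact le_rfl

theorem PSm_pos (hS : 0 < S) (hX : StrictMono X) (hY : StrictMono Y)
    (hstep : ∀ i, Y i = X i ∨ Y i = X i - 1)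
    (hdown : ∀ i, Y i = X i - 1 → 0 < X i)
    (hstay : ∀ i, Y i = X i → X i + 1 < (S : ℤ) + N) :
    0 < PSm N T S t X Y := by
  rw [PSm, if_pos hstep]
  refine div_pos (mul_pos (pairProd_pos hY) (prod_pos fun i _ => ?_))
    (mul_pos (poch_pos (by exact_mod_cast hS) N) (pairProd_pos hX))
  split_ifs with hi
  · exact_mod_cast hdown i hi
  · have : (X i : ℝ) + 1 < S + N := by exact_mod_cast hstay i ((hstep i).resolve_right hi)
    linarith

end Transitions

section Fill

variable {N T S t : ℕ} {Y X' : Fin N → ℤ}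

theorem exists_Ptp_mul_PSm_pos (ht : t < T) (hY : Y ∈ Xcal N T (S + 1) t)
    (hX' : X' ∈ Xcal N T S (t + 1)) (hnear : ∀ i, Y i ≤ X' i + 1 ∧ X' i ≤ Y i + 1) :
    ∃ Z ∈ Xcal N T (S + 1) (t + 1),
      0 < Ptp N T (S + 1) t Y Z * PSm N T (S + 1) (t + 1) Z X' := by
  obtain ⟨hYb, hYm⟩ := mem_Xcal.mp hY
  obtain ⟨hX'b, hX'm⟩ := mem_Xcal.mp hX'
  have hZm : StrictMono fun i => min (Y i) (X' i) + 1 := fun i j hij => by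
    have := hYm hij
    have := hX'm hij
    dsimp only
    omega
  refine ⟨fun i => min (Y i) (X' i) + 1, mem_Xcal.mpr ⟨fun i => ?_, hZm⟩, mul_pos ?_ ?_⟩
  · have := hYb i
    have := hX'b i
    omega
  · refine Ptp_pos ht hYm hZm (fun i => ?_) (fun i _ => ?_) (fun i _ => ?_) <;>
      have := hYb i <;> have := hX'b i <;> have := hnear i <;> omega
  · refine PSm_pos S.succ_pos hZm hX'm (fun i => ?_) (fun i _ => ?_) (fun i _ => ?_) <;>
      have := hYb i <;> have := hX'b i <;> have := hnear i <;> omega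

theorem sum_Ptp_mul_PSm_pos (ht : t < T) (hY : Y ∈ Xcal N T (S + 1) t)
    (hX' : X' ∈ Xcal N T S (t + 1)) (hnear : ∀ i, Y i ≤ X' i + 1 ∧ X' i ≤ Y i + 1) :
    0 < ∑ Z ∈ Xcal N T (S + 1) (t + 1),
      Ptp N T (S + 1) t Y Z * PSm N T (S + 1) (t + 1) Z X' := by
  obtain ⟨hYb, hYm⟩ := mem_Xcal.mp hY
  obtain ⟨-, hX'm⟩ := mem_Xcal.mp hX'
  refine sum_pos' (fun Z hZ => ?_) (exists_Ptp_mul_PSm_pos ht hY hX' hnear)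
  obtain ⟨hZb, hZm⟩ := mem_Xcal.mp hZ
  exact mul_nonneg (Ptp_nonneg ht hYm hZm (fun i => (hYb i).2.1) (fun i => (hYb i).2.2.2))
    (PSm_nonneg S.succ_pos hZm hX'm (fun i => (hZb i).1) (fun i => (hZb i).2.2.2))

end Fill

theorem diaconis_fill_general
    -- abstract part
    (A A' B B' : Type) [Fintype A] [Fintype A'] [Fintype B] [Fintype B']
    (Λ : B → A → ℝ) (Q : A → A' → ℝ) (Λ' : B' → A' → ℝ) (R : B → B' → ℝ)
    (hΛ'0 : ∀ b' a', 0 ≤ Λ' b' a') (hΛ'1 : ∀ b', ∑ a' : A', Λ' b' a' = 1)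
    (hR0 : ∀ b b', 0 ≤ R b b')
    (hcomm : ∀ (b : B) (a' : A'),
      ∑ a : A, Λ b a * Q a a' = ∑ b' : B', R b b' * Λ' b' a')
    (ν : B → ℝ)
    -- concrete part: parameters and sections for the paper's update S → S+1
    (N T S t : ℕ) (ht : t < T)
    (Yt : Fin N → ℤ) (hYt : Yt ∈ Xcal N T (S + 1) t)
    (Xt : Fin N → ℤ)
    (Xt1 : Fin N → ℤ) (hXt1 : Xt1 ∈ Xcal N T S (t + 1))
    (hpos1 : 0 < PSm N T (S + 1) t Yt Xt)
    (hpos2 : 0 < Ptp N T S t Xt Xt1) :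
    -- the B'-marginal of the evolved bivariate measure is νR
    (∀ b' : B',
      (∑ a' : A', ∑ a : A, ∑ b : B,
        (ν b * Λ b a) *
          (if 0 < ∑ b'' : B', R b b'' * Λ' b'' a' then
            Q a a' * R b b' * Λ' b' a' / (∑ b'' : B', R b b'' * Λ' b'' a')
          else 0)) = ∑ b : B, ν b * R b b') ∧
    -- well-definedness of the conditional law of Z: the denominator is positive
    0 < ∑ Z ∈ Xcal N T (S + 1) (t + 1),
        Ptp N T (S + 1) t Yt Z * PSm N T (S + 1) (t + 1) Z Xt1 := by
  refine ⟨sum_fillKernel_eq_mul hR0 hΛ'0 hΛ'1 hcomm ν,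
    sum_Ptp_mul_PSm_pos ht hYt hXt1 fun i => ?_⟩
  have := step_of_PSm_ne_zero hpos1.ne' i
  have := step_of_Ptp_ne_zero hpos2.ne' i
  omega

/-- Diaconis–Fill intertwining construction, plus the key positivity of the
denominator in the paper's sequential update. -/
theorem diaconis_fill
    -- abstract part
    (A A' B B' : Type) [Fintype A] [Fintype A'] [Fintype B] [Fintype B']
    (P : A → B → ℝ) (Λ : B → A → ℝ) (Q : A → A' → ℝ) (Λ' : B' → A' → ℝ) (R : B → B' → ℝ)
    (hP0 : ∀ a b, 0 ≤ P a b) (hP1 : ∀ a, ∑ b : B, P a b = 1)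
    (hΛ0 : ∀ b a, 0 ≤ Λ b a) (hΛ1 : ∀ b, ∑ a : A, Λ b a = 1)
    (hQ0 : ∀ a a', 0 ≤ Q a a') (hQ1 : ∀ a, ∑ a' : A', Q a a' = 1)
    (hΛ'0 : ∀ b' a', 0 ≤ Λ' b' a') (hΛ'1 : ∀ b', ∑ a' : A', Λ' b' a' = 1)
    (hR0 : ∀ b b', 0 ≤ R b b') (hR1 : ∀ b, ∑ b' : B', R b b' = 1)
    (hcomm : ∀ (b : B) (a' : A'),
      ∑ a : A, Λ b a * Q a a' = ∑ b' : B', R b b' * Λ' b' a')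
    (ν : B → ℝ) (hν0 : ∀ b, 0 ≤ ν b) (hν1 : ∑ b : B, ν b = 1)
    (μ : A → ℝ) (hνΛ : ∀ a, μ a = ∑ b : B, ν b * Λ b a)
    -- concrete part: parameters and sections for the paper's update S → S+1
    (N T S t : ℕ) (hN : 1 ≤ N) (hS : S + 1 ≤ T) (ht : t < T)
    (Yt : Fin N → ℤ) (hYt : Yt ∈ Xcal N T (S + 1) t)
    (Xt : Fin N → ℤ) (hXt : Xt ∈ Xcal N T S t)
    (Xt1 : Fin N → ℤ) (hXt1 : Xt1 ∈ Xcal N T S (t + 1))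
    (hpos1 : 0 < PSm N T (S + 1) t Yt Xt)
    (hpos2 : 0 < Ptp N T S t Xt Xt1) :
    -- the B'-marginal of the evolved bivariate measure is νR
    (∀ b' : B',
      (∑ a' : A', ∑ a : A, ∑ b : B,
        (ν b * Λ b a) *
          (if 0 < ∑ b'' : B', R b b'' * Λ' b'' a' then
            Q a a' * R b b' * Λ' b' a' / (∑ b'' : B', R b b'' * Λ' b'' a')
          else 0)) = ∑ b : B, ν b * R b b') ∧
    -- well-definedness of the conditional law of Z: the denominator is positive
    0 < ∑ Z ∈ Xcal N T (S + 1) (t + 1),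
        Ptp N T (S + 1) t Yt Z * PSm N T (S + 1) (t + 1) Z Xt1 :=
  diaconis_fill_general A A' B B' Λ Q Λ' R hΛ'0 hΛ'1 hR0 hcomm ν N T S t ht Yt hYt Xt Xt1 hXt1 hpos1
    hpos2
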